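/- arXiv:1505.00447 — 3 statements merged into one kernel-verified Lean document; each statement's English description precedes it below -/
import Mathlib

section
/- If every vehicle in a platoon follows the same speed profile as a function of position, i.e., v_i(t) = v^s(s_i(t)) for a common positive function v^s, and vehicle i satisfies the time-gap spacing policy s_i(t) = s_{i-1}(t - τ_i) at some initial time t_0, then the time-gap policy s_i(t) = s_{i-1}(t - τ_i) holds for all t ≥ t_0. -/
/-!
Along any trajectory of `ds/dt = v(s)`, the travel time `T(x) = ∫₀ˣ dz / v(z)` advances at unit
rate, so `T(s(t)) - t` is constant. Applying this to the follower and to the leader delayed by `τ`,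
the initial condition gives `T(s_i(t)) = T(s_{i-1}(t - τ))` for every `t`, and `T` is strictly
increasing because `v > 0`.
-/

noncomputable def travelTime (v : ℝ → ℝ) (x : ℝ) : ℝ :=
  ∫ z in (0 : ℝ)..x, (v z)⁻¹

section TravelTime

variable {v : ℝ → ℝ}

lemma hasDerivAt_travelTime (hv : Continuous v) (hv0 : ∀ z, v z ≠ 0) (x : ℝ) :
    HasDerivAt (travelTime v) (v x)⁻¹ x :=
  have hinv : Continuous fun z => (v z)⁻¹ := hv.inv₀ hv0
  intervalIntegral.integral_hasDerivAt_right (hinv.intervalIntegrable _ _)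
    (hinv.stronglyMeasurableAtFilter _ _) hinv.continuousAt

lemma strictMono_travelTime (hv : Continuous v) (hpos : ∀ z, 0 < v z) :
    StrictMono (travelTime v) :=
  strictMono_of_hasDerivAt_pos (hasDerivAt_travelTime hv fun z => (hpos z).ne')
    fun x => inv_pos.mpr (hpos x)

lemma travelTime_comp_sub_eq (hv : Continuous v) (hv0 : ∀ z, v z ≠ 0) {s : ℝ → ℝ}
    (hs : ∀ t, HasDerivAt s (v (s t)) t) (t t' : ℝ) :
    travelTime v (s t) - t = travelTime v (s t') - t' := by
  have hderiv : ∀ t, HasDerivAt (fun t => travelTime v (s t) - t) 0 t := fun t => by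
    have h := ((hasDerivAt_travelTime hv hv0 (s t)).comp t (hs t)).sub (hasDerivAt_id t)
    rwa [inv_mul_cancel₀ (hv0 _), sub_self] at h
  exact is_const_of_deriv_eq_zero (fun t => (hderiv t).differentiableAt)
    (fun t => (hderiv t).deriv) t t'

end TravelTime

theorem time_gap_policy_invariant_general
    (vs : ℝ → ℝ) (hcont : Continuous vs) (hpos : ∀ z, 0 < vs z)
    (sPrev sCur : ℝ → ℝ) (τ : ℝ)
    (hPrev : ∀ t, HasDerivAt sPrev (vs (sPrev t)) t)
    (hCur : ∀ t, HasDerivAt sCur (vs (sCur t)) t)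
    (t0 : ℝ) (hinit : sCur t0 = sPrev (t0 - τ)) :
    ∀ t ≥ t0, sCur t = sPrev (t - τ) := by
  intro t _
  have hvs0 : ∀ z, vs z ≠ 0 := fun z => (hpos z).ne'
  have hCurT := travelTime_comp_sub_eq hcont hvs0 hCur t t0
  have hPrevT := travelTime_comp_sub_eq hcont hvs0 hPrev (t - τ) (t0 - τ)
  rw [hinit] at hCurT
  exact (strictMono_travelTime hcont hpos).injective (by linarith)

/-- If every vehicle follows the same positive continuous speed profile over space
and the time-gap policy holds at time `t₀`, then it holds for all `t ≥ t₀`. -/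
theorem time_gap_policy_invariant
    (vs : ℝ → ℝ) (hcont : Continuous vs) (hpos : ∀ z, 0 < vs z)
    (sPrev sCur : ℝ → ℝ) (τ : ℝ) (hτ : 0 < τ)
    (hPrev : ∀ t, HasDerivAt sPrev (vs (sPrev t)) t)
    (hCur : ∀ t, HasDerivAt sCur (vs (sCur t)) t)
    (t0 : ℝ) (hinit : sCur t0 = sPrev (t0 - τ)) :
    ∀ t ≥ t0, sCur t = sPrev (t - τ) :=
  time_gap_policy_invariant_general vs hcont hpos sPrev sCur τ hPrev hCur t0 hinit
end

section
/- Conversely, if two vehicles satisfy the time-gap policy s_i(t) = s_{i-1}(t - τ_i) for all t, with differentiable positions, and each vehicle's speed is a function of its position (v_i(t) = v_i^s(s_i(t))), then the two position-parameterized speed profiles agree: v_i^s(z) = v_{i-1}^s(z) for all z in the range of s_i. -/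
/-! A time-gap follower retraces the leader's trajectory: its velocity at time `t` equals the
leader's velocity at `t - τ`, when the leader was at the same position `sCur t`. Since each
speed is a function of position, evaluating both profiles at that position gives the claim. -/

theorem HasDerivAt.eq_of_eq_comp_sub_const {𝕜 F : Type*} [NontriviallyNormedField 𝕜]
    [NormedAddCommGroup F] [NormedSpace 𝕜 F] {f g : 𝕜 → F} {f' g' : F} {x a : 𝕜}
    (hf : HasDerivAt f f' x) (hg : HasDerivAt g g' (x - a)) (hfg : ∀ y, f y = g (y - a)) :
    f' = g' := by
  rw [funext hfg] at hf
  exact hf.unique (hg.comp_sub_const x a)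

theorem time_gap_implies_same_space_profile_general
    (sPrev sCur vPrev vCur : ℝ → ℝ) (vsPrev vsCur : ℝ → ℝ) (τ : ℝ)
    (hdPrev : ∀ t, HasDerivAt sPrev (vPrev t) t)
    (hdCur : ∀ t, HasDerivAt sCur (vCur t) t)
    (hprofPrev : ∀ t, vPrev t = vsPrev (sPrev t))
    (hprofCur : ∀ t, vCur t = vsCur (sCur t))
    (hgap : ∀ t, sCur t = sPrev (t - τ)) :
    ∀ z ∈ Set.range sCur, vsCur z = vsPrev z := by
  rintro _ ⟨t, rfl⟩
  have hspeed : vCur t = vPrev (t - τ) := (hdCur t).eq_of_eq_comp_sub_const (hdPrev (t - τ)) hgap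
  calc vsCur (sCur t) = vCur t := (hprofCur t).symm
    _ = vPrev (t - τ) := hspeed
    _ = vsPrev (sPrev (t - τ)) := hprofPrev _
    _ = vsPrev (sCur t) := by rw [hgap]

/-- If two vehicles satisfy the time-gap policy for all times, with speeds given as
functions of position, then their position-parameterized speed profiles agree on the
range of the follower's position map. -/
theorem time_gap_implies_same_space_profile
    (sPrev sCur vPrev vCur : ℝ → ℝ) (vsPrev vsCur : ℝ → ℝ) (τ : ℝ) (hτ : 0 < τ)
    (hdPrev : ∀ t, HasDerivAt sPrev (vPrev t) t)
    (hdCur : ∀ t, HasDerivAt sCur (vCur t) t)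
    (hprofPrev : ∀ t, vPrev t = vsPrev (sPrev t))
    (hprofCur : ∀ t, vCur t = vsCur (sCur t))
    (hgap : ∀ t, sCur t = sPrev (t - τ)) :
    ∀ z ∈ Set.range sCur, vsCur z = vsPrev z :=
  time_gap_implies_same_space_profile_general sPrev sCur vPrev vCur vsPrev vsCur τ hdPrev hdCur
    hprofPrev hprofCur hgap
end

section
/- Platoon safety by induction: consider vehicles i₀, i₀+1, …, N_v with double-integrator dynamics, where each follower's admissible control set A^f(v) = [ā_min, a̲_max] (for v > 0) is contained in the perturbation set A^p(v) = [a̲_min, ā_max] (for v > 0), since a̲_min ≤ ā_min and a̲_max ≤ ā_max. If for each consecutive pair the set S is robustly controlled invariant against leader inputs in A^p using follower inputs in A^f (as in Lemma 1), then there exist feedback controls a_i ∈ A^f for all i ∈ {i₀+1,…,N_v} such that, provided each consecutive pair's state is initially in S and vehicle i₀ applies any input in A^p, every consecutive pair's state remains in S for all future times. -/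
/-- Theorem 1: platoon safety by induction. If the pair safety set `S` is robustly
controlled invariant against leader inputs in `A^p` using follower inputs in
`A^f ⊆ A^p`, then there are feedback controls for all followers of vehicle `i₀` keeping
every consecutive pair in `S`, whatever admissible input vehicle `i₀` applies. -/
theorem platoon_safety_induction
    (i0 Nv : ℕ) (hi : i0 < Nv)
    (S : ℝ → ℝ → ℝ → ℝ → Prop) (Ap Af : ℝ → Set ℝ)
    (hsub : ∀ v, Af v ⊆ Ap v)
    (hinv : ∃ φ : ℝ → ℝ → ℝ → ℝ → ℝ,
      (∀ vL sL vF sF, φ vL sL vF sF ∈ Af vF) ∧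
      ∀ (sL vL sF vF aL : ℝ → ℝ),
        (∀ t, HasDerivAt sL (vL t) t) → (∀ t, HasDerivAt vL (aL t) t) →
        (∀ t, HasDerivAt sF (vF t) t) →
        (∀ t, HasDerivAt vF (φ (vL t) (sL t) (vF t) (sF t)) t) →
        (∀ t, aL t ∈ Ap (vL t)) →
        S (vL 0) (sL 0) (vF 0) (sF 0) →
        ∀ t ≥ 0, S (vL t) (sL t) (vF t) (sF t)) :
    ∃ φ : ℝ → ℝ → ℝ → ℝ → ℝ,
      (∀ vL sL vF sF, φ vL sL vF sF ∈ Af vF) ∧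
      ∀ (v s : ℕ → ℝ → ℝ) (a0 : ℝ → ℝ),
        (∀ i, i0 ≤ i → i ≤ Nv → ∀ t, HasDerivAt (s i) (v i t) t) →
        (∀ t, HasDerivAt (v i0) (a0 t) t) →
        (∀ t, a0 t ∈ Ap (v i0 t)) →
        (∀ i, i0 < i → i ≤ Nv → ∀ t,
          HasDerivAt (v i) (φ (v (i - 1) t) (s (i - 1) t) (v i t) (s i t)) t) →
        (∀ i, i0 < i → i ≤ Nv → S (v (i - 1) 0) (s (i - 1) 0) (v i 0) (s i 0)) →
        ∀ i, i0 < i → i ≤ Nv → ∀ t ≥ 0,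
          S (v (i - 1) t) (s (i - 1) t) (v i t) (s i t) := by
  obtain ⟨φ, hφAf, hφinv⟩ := hinv
  refine ⟨φ, hφAf, ?_⟩
  intro v s a0 hs hv0 ha0 hvF hinit i hi0 hiNv t ht
  have hle : i0 ≤ i - 1 := Nat.le_sub_one_of_lt hi0
  have hlt : i - 1 ≤ Nv := le_trans (Nat.sub_le i 1) hiNv
  -- leader input for the pair (i-1, i)
  by_cases h : i - 1 = i0
  · exact hφinv (s (i - 1)) (v (i - 1)) (s i) (v i) a0
      (hs (i - 1) hle hlt) (h ▸ hv0) (hs i (le_of_lt (lt_of_le_of_lt (Nat.le_refl i0) hi0)) hiNv)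
      (hvF i hi0 hiNv) (h ▸ ha0) (hinit i hi0 hiNv) t ht
  · have hlt' : i0 < i - 1 := lt_of_le_of_ne hle (Ne.symm h)
    exact hφinv (s (i - 1)) (v (i - 1)) (s i) (v i)
      (fun t => φ (v (i - 1 - 1) t) (s (i - 1 - 1) t) (v (i - 1) t) (s (i - 1) t))
      (hs (i - 1) hle hlt) (hvF (i - 1) hlt' hlt)
      (hs i (le_of_lt hi0) hiNv) (hvF i hi0 hiNv)
      (fun t => hsub _ (hφAf _ _ _ _)) (hinit i hi0 hiNv) t ht
end
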